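/- Let A be a separable Banach algebra with a contractive multiplication ⋆ and a distinguished multiplicative character e : A → ℂ (augmentation), and suppose for every finite set F ⊆ A and ε > 0 there exists a state-like element ω (norm-one, e(ω)=1) with ‖f ⋆ ω − e(f) ω‖ < ε for all f ∈ F. Then there exists a single norm-one element μ with e(μ)=1 such that ‖f ⋆ μⁿ − e(f) μⁿ‖ → 0 as n → ∞ for every f ∈ A, where μⁿ is the n-fold ⋆-power of μ. -/
import Mathlib

open Filter

/-- The `(n+1)`-st power `μ^{n+1}` in a (possibly non-unital) algebra. -/
def algPow {A : Type*} [NonUnitalNormedRing A] (μ : A) : ℕ → A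
  | 0 => μ
  | n + 1 => algPow μ n * μ

section Aux
variable {A : Type*} [NonUnitalNormedRing A]

/-- product `ω l₁ * ⋯ * ω l_r` for a nonempty word (head, tail). -/
noncomputable def wprod (ω : ℕ → A) : ℕ → List ℕ → A
  | l, [] => ω l
  | l, j :: L => ω l * wprod ω j L

lemma wprod_norm_le (ω : ℕ → A) (hω : ∀ i, ‖ω i‖ = 1) :
    ∀ (L : List ℕ) (l : ℕ), ‖wprod ω l L‖ ≤ 1 := by
  intro L
  induction L with
  | nil => intro l; simp [wprod, hω]
  | cons j L ih =>
      intro l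
      calc ‖ω l * wprod ω j L‖ ≤ ‖ω l‖ * ‖wprod ω j L‖ := norm_mul_le _ _
        _ ≤ 1 * 1 := mul_le_mul (le_of_eq (hω l)) (ih j) (norm_nonneg _) zero_le_one
        _ = 1 := one_mul 1

lemma wprod_append (ω : ℕ → A) (j : ℕ) :
    ∀ (L : List ℕ) (l : ℕ), wprod ω l (L ++ [j]) = wprod ω l L * ω j := by
  intro L
  induction L with
  | nil => intro l; simp [wprod]
  | cons i L ih => intro l; simp [wprod, ih, mul_assoc]

end Aux

section RCLM
variable {A : Type*} [NonUnitalNormedRing A] [NormedSpace ℂ A]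
  [IsScalarTower ℂ A A] [SMulCommClass ℂ A A]

/-- iterated right multiplication by `μ`, as a continuous linear map. -/
noncomputable def rclm (μ : A) : ℕ → A →L[ℂ] A
  | 0 => ContinuousLinearMap.id ℂ A
  | n + 1 => rclm μ n ∘L (ContinuousLinearMap.mul ℂ A).flip μ

@[simp] lemma rclm_zero (μ : A) (x : A) : rclm μ 0 x = x := rfl

lemma rclm_succ (μ : A) (n : ℕ) (x : A) : rclm μ (n + 1) x = rclm μ n (x * μ) := rfl

lemma rclm_mul (μ : A) : ∀ (n : ℕ) (x : A), rclm μ n x * μ = rclm μ n (x * μ) := by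
  intro n
  induction n with
  | zero => intro x; rfl
  | succ n ih => intro x; rw [rclm_succ, ih, rclm_succ]

lemma rclm_norm_le (μ : A) (hμ : ‖μ‖ ≤ 1) : ∀ (n : ℕ) (x : A), ‖rclm μ n x‖ ≤ ‖x‖ := by
  intro n
  induction n with
  | zero => intro x; simp
  | succ n ih =>
      intro x
      calc ‖rclm μ (n+1) x‖ = ‖rclm μ n (x * μ)‖ := rfl
        _ ≤ ‖x * μ‖ := ih _
        _ ≤ ‖x‖ * ‖μ‖ := norm_mul_le _ _
        _ ≤ ‖x‖ * 1 := by gcongr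
        _ = ‖x‖ := mul_one _

end RCLM

section Build
variable {A : Type*} [NonUnitalNormedRing A] [NormedSpace ℂ A]

/-- dependent-choice construction of the almost-invariant sequence. -/
lemma build_omega (e : A →ₗ[ℂ] ℂ) (a : ℕ → A) (δ : ℕ → ℝ) (hδ : ∀ l, 0 < δ l)
    (h_almost_inv : ∀ (F : Finset A) (ε : ℝ), 0 < ε →
      ∃ ω : A, ‖ω‖ = 1 ∧ e ω = 1 ∧ ∀ f ∈ F, ‖f * ω - e f • ω‖ < ε) :
    ∃ ω : ℕ → A, ∀ l, ‖ω l‖ = 1 ∧ e (ω l) = 1 ∧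
      (∀ i ≤ l, ‖a i * ω l - e (a i) • ω l‖ < δ l) ∧
      (∀ i < l, ‖ω i * ω l - ω l‖ < δ l) := by
  classical
  set next : ℕ → (ℕ → A) → A := fun n u =>
    (h_almost_inv ((Finset.range (n + 1)).image a ∪ (Finset.range n).image u) (δ n)
      (hδ n)).choose with hnext
  set s : ℕ → (ℕ → A) := fun n =>
    Nat.rec (fun _ => 0) (fun n u => Function.update u n (next n u)) n with hs
  have hs_succ : ∀ n, s (n + 1) = Function.update (s n) n (next n (s n)) := fun n => rfl
  set ω : ℕ → A := fun n => s (n + 1) n with hω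
  have agree : ∀ n i, i < n → s n i = ω i := by
    intro n
    induction n with
    | zero => intro i hi; omega
    | succ n ih =>
        intro i hi
        rw [hs_succ]
        rcases Nat.lt_or_ge i n with h | h
        · rw [Function.update_of_ne (by omega), ih i h]
        · have hin : i = n := by omega
          subst hin
          rw [Function.update_self]
          show _ = s (i + 1) i
          rw [hs_succ, Function.update_self]
  have hωdef : ∀ n, ω n = next n (s n) := by
    intro n
    show s (n + 1) n = _
    rw [hs_succ, Function.update_self]
  have basic : ∀ l, ‖ω l‖ = 1 ∧ e (ω l) = 1 ∧
      ∀ f ∈ (Finset.range (l + 1)).image a ∪ (Finset.range l).image (s l),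
        ‖f * ω l - e f • ω l‖ < δ l := by
    intro l
    have spec := (h_almost_inv ((Finset.range (l + 1)).image a ∪ (Finset.range l).image (s l))
        (δ l) (hδ l)).choose_spec
    have key : ω l = (h_almost_inv ((Finset.range (l + 1)).image a ∪
        (Finset.range l).image (s l)) (δ l) (hδ l)).choose := hωdef l
    rw [key]
    exact spec
  refine ⟨ω, fun l => ⟨(basic l).1, (basic l).2.1, ?_, ?_⟩⟩
  · intro i hi
    exact (basic l).2.2 (a i) (Finset.mem_union_left _ (Finset.mem_image_of_mem a
      (Finset.mem_range.mpr (by omega))))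
  · intro i hi
    have hmem : ω i ∈ (Finset.range (l + 1)).image a ∪ (Finset.range l).image (s l) := by
      refine Finset.mem_union_right _ ?_
      rw [Finset.mem_image]
      exact ⟨i, Finset.mem_range.mpr hi, agree l i hi⟩
    have h := (basic l).2.2 (ω i) hmem
    rwa [(basic i).2.1, one_smul] at h

end Build

private lemma kv_arith (θ P d N R M : ℝ) (hθ0 : 0 ≤ θ) (hθ1 : θ ≤ 1) (hP : 0 ≤ P)
    (hd : 0 ≤ d) (hN : 0 ≤ N) (hR : 0 ≤ R) (hM : 0 ≤ M) :
    θ * (2 * M * P + (2 * M + 1) * ((N + (R + 2)) * N) * d) + (2 * M * (R + 1) + 1) * d ≤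
      2 * M * (θ * P) + (2 * M + 1) * ((N + 1 + (R + 1)) * (N + 1)) * d := by
  have hQ0 : 0 ≤ (2 * M + 1) * ((N + (R + 2)) * N) * d := by positivity
  nlinarith [mul_nonneg (sub_nonneg.mpr hθ1) hQ0, mul_nonneg (mul_nonneg hM hN) hd,
    mul_nonneg hM hd, mul_nonneg hN hd, mul_nonneg hR hd]

set_option maxHeartbeats 1000000 in
/-- Kaimanovich–Vershik / Rosenblatt: let `A` be a separable Banach algebra (with contractive
multiplication) with a contractive multiplicative character `e` (augmentation), and suppose
that for every finite `F ⊆ A` and `ε > 0` there is a state-like element `ω` (norm one,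
`e(ω) = 1`) with `‖f ⋆ ω − e(f)·ω‖ < ε` for all `f ∈ F`.  Then there is a single norm-one
element `μ` with `e(μ) = 1` such that `‖f ⋆ μⁿ − e(f)·μⁿ‖ → 0` for every `f ∈ A`. -/
theorem exists_asymptotically_invariant_power_sequence
    {A : Type*} [NonUnitalNormedRing A] [NormedSpace ℂ A]
    [IsScalarTower ℂ A A] [SMulCommClass ℂ A A]
    [CompleteSpace A] [TopologicalSpace.SeparableSpace A]
    (e : A →ₗ[ℂ] ℂ)
    (he_mult : ∀ a b : A, e (a * b) = e a * e b)
    (he_contr : ∀ a : A, ‖e a‖ ≤ ‖a‖)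
    (h_almost_inv : ∀ (F : Finset A) (ε : ℝ), 0 < ε →
      ∃ ω : A, ‖ω‖ = 1 ∧ e ω = 1 ∧ ∀ f ∈ F, ‖f * ω - e f • ω‖ < ε) :
    ∃ μ : A, ‖μ‖ = 1 ∧ e μ = 1 ∧
      ∀ f : A, Tendsto (fun n : ℕ => ‖f * algPow μ n - e f • algPow μ n‖) atTop (nhds 0) := by
  classical
  obtain ⟨a, ha⟩ := TopologicalSpace.exists_dense_seq A
  set δ : ℕ → ℝ := fun l => (32:ℝ)⁻¹ ^ l with hδdef
  have hδpos : ∀ l, 0 < δ l := fun l => pow_pos (by norm_num) l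
  have hδanti : ∀ {kk j : ℕ}, kk ≤ j → δ j ≤ δ kk := fun h =>
    pow_le_pow_of_le_one (by norm_num) (by norm_num) h
  obtain ⟨ω, hω⟩ := build_omega e a δ hδpos h_almost_inv
  have hω1 : ∀ l, ‖ω l‖ = 1 := fun l => (hω l).1
  have hωe : ∀ l, e (ω l) = 1 := fun l => (hω l).2.1
  have hωa : ∀ i l, i ≤ l → ‖a i * ω l - e (a i) • ω l‖ < δ l := fun i l h => (hω l).2.2.1 i h
  have hωω : ∀ i l, i < l → ‖ω i * ω l - ω l‖ < δ l := fun i l h => (hω l).2.2.2 i h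
  -- coefficients
  set c : ℕ → ℂ := fun j => (2:ℂ)⁻¹ ^ (j + 1) with hcdef
  have hcnorm : ∀ j, ‖c j‖ = (2:ℝ)⁻¹ ^ (j + 1) := by intro j; simp [hcdef]
  have hcrpos : ∀ j : ℕ, (0:ℝ) < (2:ℝ)⁻¹ ^ (j + 1) := fun j => pow_pos (by norm_num) _
  have hsum_norm : Summable (fun j : ℕ => (2:ℝ)⁻¹ ^ (j + 1)) := by
    simpa [pow_succ'] using
      (summable_geometric_of_lt_one (by norm_num : (0:ℝ) ≤ 2⁻¹) (by norm_num)).mul_left (2:ℝ)⁻¹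
  have hsum_total : ∑' j : ℕ, (2:ℝ)⁻¹ ^ (j + 1) = 1 := by
    have h := tsum_geometric_of_lt_one (by norm_num : (0:ℝ) ≤ 2⁻¹) (by norm_num)
    calc ∑' j : ℕ, (2:ℝ)⁻¹ ^ (j + 1) = ∑' j : ℕ, (2:ℝ)⁻¹ * (2:ℝ)⁻¹ ^ j := by
          simp [pow_succ']
      _ = (2:ℝ)⁻¹ * ∑' j : ℕ, (2:ℝ)⁻¹ ^ j := tsum_mul_left
      _ = 1 := by rw [h]; norm_num
  -- the measure μ
  have hμsummand : Summable (fun j => c j • ω j) := by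
    apply Summable.of_norm
    have : (fun j => ‖c j • ω j‖) = fun j : ℕ => (2:ℝ)⁻¹ ^ (j + 1) := by
      funext j; rw [norm_smul, hcnorm, hω1, mul_one]
    rw [this]; exact hsum_norm
  set μ : A := ∑' j, c j • ω j with hμdef
  -- generic summability
  have hsumm_mul : ∀ x : A, Summable (fun j => c j • (x * ω j)) := by
    intro x
    apply Summable.of_norm
    refine Summable.of_nonneg_of_le (fun j => norm_nonneg _) (fun j => ?_)
      (hsum_norm.mul_right ‖x‖)
    rw [norm_smul, hcnorm]
    refine mul_le_mul_of_nonneg_left ?_ (le_of_lt (hcrpos j))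
    calc ‖x * ω j‖ ≤ ‖x‖ * ‖ω j‖ := norm_mul_le _ _
      _ = ‖x‖ := by rw [hω1, mul_one]
  have hexp : ∀ x : A, x * μ = ∑' j, c j • (x * ω j) := by
    intro x
    have h := (ContinuousLinearMap.mul ℂ A x).map_tsum hμsummand
    calc x * μ = ∑' j, x * (c j • ω j) := h
      _ = ∑' j, c j • (x * ω j) := by
          apply tsum_congr; intro j; rw [mul_smul_comm]
  -- e μ = 1
  set E : A →L[ℂ] ℂ := e.mkContinuous 1 (fun x => by simpa using he_contr x) with hEdef
  have hEe : ∀ x, E x = e x := fun x => rfl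
  have heμ : e μ = 1 := by
    have h := E.map_tsum hμsummand
    have h2 : ∀ j : ℕ, E (c j • ω j) = c j := by
      intro j
      rw [hEe, map_smul, hωe, smul_eq_mul, mul_one]
    have h3 : ∑' j : ℕ, c j = 1 := by
      have hg := tsum_geometric_of_norm_lt_one (by norm_num : ‖(2:ℂ)⁻¹‖ < 1)
      calc ∑' j : ℕ, (2:ℂ)⁻¹ ^ (j + 1) = ∑' j : ℕ, (2:ℂ)⁻¹ * (2:ℂ)⁻¹ ^ j := by
            simp [pow_succ']
        _ = (2:ℂ)⁻¹ * ∑' j : ℕ, (2:ℂ)⁻¹ ^ j := tsum_mul_left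
        _ = 1 := by rw [hg]; norm_num
    rw [← hEe, h]
    rw [tsum_congr h2]
    exact h3
  -- ‖μ‖ = 1
  have hμnorm : ‖μ‖ = 1 := by
    apply le_antisymm
    · have h1 : ‖μ‖ ≤ ∑' j : ℕ, ‖c j • ω j‖ := by
        apply norm_tsum_le_tsum_norm
        have : (fun j => ‖c j • ω j‖) = fun j : ℕ => (2:ℝ)⁻¹ ^ (j + 1) := by
          funext j; rw [norm_smul, hcnorm, hω1, mul_one]
        rw [this]; exact hsum_norm
      have h2 : ∑' j : ℕ, ‖c j • ω j‖ = 1 := by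
        have : (fun j => ‖c j • ω j‖) = fun j : ℕ => (2:ℝ)⁻¹ ^ (j + 1) := by
          funext j; rw [norm_smul, hcnorm, hω1, mul_one]
        rw [this]; exact hsum_total
      linarith
    · have := he_contr μ
      rw [heμ] at this
      simpa using this
  have hμle1 : ‖μ‖ ≤ 1 := le_of_eq hμnorm
  -- algPow basics
  have halg_succ : ∀ n, algPow μ (n + 1) = algPow μ n * μ := fun n => rfl
  have halg_norm : ∀ n, ‖algPow μ n‖ ≤ 1 := by
    intro n
    induction n with
    | zero => exact hμle1
    | succ n ih =>
        calc ‖algPow μ n * μ‖ ≤ ‖algPow μ n‖ * ‖μ‖ := norm_mul_le _ _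
          _ ≤ 1 * 1 := mul_le_mul ih hμle1 (norm_nonneg _) zero_le_one
          _ = 1 := one_mul 1
  have hD_rclm : ∀ (g : A) (n : ℕ),
      g * algPow μ n - e g • algPow μ n = rclm μ n (g * μ - e g • μ) := by
    intro g n
    induction n with
    | zero => simp [algPow]
    | succ n ih =>
        rw [halg_succ, ← mul_assoc, ← smul_mul_assoc, ← sub_mul, ih, rclm_mul, ← rclm_succ]
  have hcollapse : ∀ (L : List ℕ) (l j : ℕ), l < j → (∀ i ∈ L, i < j) →
      ‖wprod ω l L * ω j - ω j‖ ≤ ((L.length : ℝ) + 1) * δ j := by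
    intro L
    induction L with
    | nil =>
        intro l j hl _
        have h := le_of_lt (hωω l j hl)
        simpa [wprod] using h
    | cons i L ih =>
        intro l j hl hL
        have hi : i < j := hL i (by simp)
        have hL' : ∀ i' ∈ L, i' < j := fun i' hi' => hL i' (by simp [hi'])
        have hsplit : wprod ω l (i :: L) * ω j - ω j
            = ω l * (wprod ω i L * ω j - ω j) + (ω l * ω j - ω j) := by
          show ω l * wprod ω i L * ω j - ω j = _
          rw [mul_sub, mul_assoc]
          abel
        rw [hsplit]
        have h1 : ‖ω l * (wprod ω i L * ω j - ω j)‖ ≤ ((L.length : ℝ) + 1) * δ j := by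
          calc ‖ω l * (wprod ω i L * ω j - ω j)‖ ≤ ‖ω l‖ * ‖wprod ω i L * ω j - ω j‖ :=
                norm_mul_le _ _
            _ = ‖wprod ω i L * ω j - ω j‖ := by rw [hω1, one_mul]
            _ ≤ ((L.length : ℝ) + 1) * δ j := ih i j hi hL'
        have h2 : ‖ω l * ω j - ω j‖ ≤ δ j := le_of_lt (hωω l j hl)
        calc ‖ω l * (wprod ω i L * ω j - ω j) + (ω l * ω j - ω j)‖
            ≤ ‖ω l * (wprod ω i L * ω j - ω j)‖ + ‖ω l * ω j - ω j‖ := norm_add_le _ _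
          _ ≤ ((L.length : ℝ) + 1) * δ j + δ j := add_le_add h1 h2
          _ = ((((i :: L).length : ℝ)) + 1) * δ j := by
              simp only [List.length_cons]
              push_cast
              ring
  have hgeom : ∀ k : ℕ, ∑ j ∈ Finset.range k, (2:ℝ)⁻¹ ^ (j + 1) = 1 - (2:ℝ)⁻¹ ^ k := by
    intro k
    induction k with
    | zero => simp
    | succ k ih => rw [Finset.sum_range_succ, ih]; ring
  -- the central quantitative bound
  have bound : ∀ m k : ℕ, m ≤ k → ∀ n : ℕ,
      ‖a m * algPow μ n - e (a m) • algPow μ n‖ ≤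
        2 * ‖a m‖ * (1 - (2:ℝ)⁻¹ ^ k) ^ n + (2 * ‖a m‖ + 1) * ((n : ℝ) + 1) ^ 2 * δ k := by
    intro m k hmk
    set M := ‖a m‖ with hM
    have hM0 : (0:ℝ) ≤ M := norm_nonneg _
    have heM : ‖e (a m)‖ ≤ M := he_contr _
    set θ : ℝ := 1 - (2:ℝ)⁻¹ ^ k with hθ
    have hxk1 : (2:ℝ)⁻¹ ^ k ≤ 1 := pow_le_one₀ (by norm_num) (by norm_num)
    have hxk0 : (0:ℝ) < (2:ℝ)⁻¹ ^ k := pow_pos (by norm_num) k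
    have hθ0 : 0 ≤ θ := by rw [hθ]; linarith
    have hθ1 : θ ≤ 1 := by rw [hθ]; linarith
    have hdk : 0 < δ k := hδpos k
    -- norm bound on the basic elements
    have hhnorm : ∀ (l : ℕ) (L : List ℕ),
        ‖a m * wprod ω l L - e (a m) • wprod ω l L‖ ≤ 2 * M := by
      intro l L
      have hW : ‖wprod ω l L‖ ≤ 1 := wprod_norm_le ω hω1 L l
      have h1 : ‖a m * wprod ω l L‖ ≤ M := by
        calc ‖a m * wprod ω l L‖ ≤ ‖a m‖ * ‖wprod ω l L‖ := norm_mul_le _ _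
          _ ≤ M * 1 := by gcongr
          _ = M := mul_one _
      have h2 : ‖e (a m) • wprod ω l L‖ ≤ M := by
        rw [norm_smul]
        calc ‖e (a m)‖ * ‖wprod ω l L‖ ≤ M * 1 := by
              exact mul_le_mul heM hW (norm_nonneg _) hM0
          _ = M := mul_one _
      calc ‖a m * wprod ω l L - e (a m) • wprod ω l L‖
          ≤ ‖a m * wprod ω l L‖ + ‖e (a m) • wprod ω l L‖ := norm_sub_le _ _
        _ ≤ M + M := add_le_add h1 h2
        _ = 2 * M := by ring
    -- key per-letter estimate for large letters
    have hkey : ∀ (l : ℕ) (L : List ℕ) (j : ℕ), l < k → (∀ i ∈ L, i < k) → k ≤ j →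
        ‖(a m * wprod ω l L - e (a m) • wprod ω l L) * ω j‖ ≤
          (2 * M * ((L.length : ℝ) + 1) + 1) * δ j := by
      intro l L j hl hL hkj
      have hdj : 0 < δ j := hδpos j
      have hWω : ‖wprod ω l L * ω j - ω j‖ ≤ ((L.length : ℝ) + 1) * δ j :=
        hcollapse L l j (lt_of_lt_of_le hl hkj) (fun i hi => lt_of_lt_of_le (hL i hi) hkj)
      have hfω : ‖a m * ω j - e (a m) • ω j‖ ≤ δ j := le_of_lt (hωa m j (le_trans hmk hkj))
      have hsplit : (a m * wprod ω l L - e (a m) • wprod ω l L) * ω j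
          = a m * (wprod ω l L * ω j - ω j) + (a m * ω j - e (a m) • ω j)
            - e (a m) • (wprod ω l L * ω j - ω j) := by
        rw [sub_mul, smul_mul_assoc, mul_assoc, mul_sub, smul_sub]
        abel
      rw [hsplit]
      have t1 : ‖a m * (wprod ω l L * ω j - ω j)‖ ≤ M * (((L.length : ℝ) + 1) * δ j) := by
        calc ‖a m * (wprod ω l L * ω j - ω j)‖ ≤ ‖a m‖ * ‖wprod ω l L * ω j - ω j‖ :=
              norm_mul_le _ _
          _ ≤ M * (((L.length : ℝ) + 1) * δ j) := by
              exact mul_le_mul (le_refl M) hWω (norm_nonneg _) hM0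
      have t3 : ‖e (a m) • (wprod ω l L * ω j - ω j)‖ ≤ M * (((L.length : ℝ) + 1) * δ j) := by
        rw [norm_smul]
        exact mul_le_mul heM hWω (norm_nonneg _) hM0
      calc ‖a m * (wprod ω l L * ω j - ω j) + (a m * ω j - e (a m) • ω j)
              - e (a m) • (wprod ω l L * ω j - ω j)‖
          ≤ ‖a m * (wprod ω l L * ω j - ω j) + (a m * ω j - e (a m) • ω j)‖
            + ‖e (a m) • (wprod ω l L * ω j - ω j)‖ := norm_sub_le _ _
        _ ≤ ‖a m * (wprod ω l L * ω j - ω j)‖ + ‖a m * ω j - e (a m) • ω j‖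
            + ‖e (a m) • (wprod ω l L * ω j - ω j)‖ := by
              have := norm_add_le (a m * (wprod ω l L * ω j - ω j))
                (a m * ω j - e (a m) • ω j)
              linarith
        _ ≤ M * (((L.length : ℝ) + 1) * δ j) + δ j + M * (((L.length : ℝ) + 1) * δ j) := by
              linarith
        _ = (2 * M * ((L.length : ℝ) + 1) + 1) * δ j := by ring
    -- the main induction over powers
    have main : ∀ n : ℕ, ∀ (l : ℕ) (L : List ℕ), l < k → (∀ i ∈ L, i < k) →
        ‖rclm μ n (a m * wprod ω l L - e (a m) • wprod ω l L)‖ ≤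
          2 * M * θ ^ n + (2 * M + 1) * (((n : ℝ) + ((L.length : ℝ) + 1)) * (n : ℝ)) * δ k := by
      intro n
      induction n with
      | zero =>
          intro l L hl hL
          simpa using hhnorm l L
      | succ n ih =>
          intro l L hl hL
          set R : ℝ := (L.length : ℝ) with hR
          have hR0 : (0:ℝ) ≤ R := Nat.cast_nonneg _
          have hNn : (0:ℝ) ≤ (n : ℝ) := Nat.cast_nonneg n
          have hpn : (0:ℝ) ≤ θ ^ n := pow_nonneg hθ0 n
          set x : A := a m * wprod ω l L - e (a m) • wprod ω l L with hx
          have hxnorm : ‖x‖ ≤ 2 * M := hhnorm l L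
          have e1 : rclm μ (n + 1) x = ∑' j, c j • rclm μ n (x * ω j) := by
            rw [rclm_succ, hexp x, (rclm μ n).map_tsum (hsumm_mul x)]
            exact tsum_congr fun j => (rclm μ n).map_smul _ _
          have hterm : ∀ j, ‖c j • rclm μ n (x * ω j)‖ ≤ (2:ℝ)⁻¹ ^ (j + 1) * (2 * M) := by
            intro j
            rw [norm_smul, hcnorm]
            refine mul_le_mul_of_nonneg_left ?_ (le_of_lt (hcrpos j))
            calc ‖rclm μ n (x * ω j)‖ ≤ ‖x * ω j‖ := rclm_norm_le μ hμle1 n _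
              _ ≤ ‖x‖ * ‖ω j‖ := norm_mul_le _ _
              _ = ‖x‖ := by rw [hω1, mul_one]
              _ ≤ 2 * M := hxnorm
          have hgsumm : Summable (fun j => ‖c j • rclm μ n (x * ω j)‖) :=
            Summable.of_nonneg_of_le (fun j => norm_nonneg _) hterm (hsum_norm.mul_right _)
          have e2 : ‖rclm μ (n + 1) x‖ ≤ ∑' j, ‖c j • rclm μ n (x * ω j)‖ := by
            rw [e1]; exact norm_tsum_le_tsum_norm hgsumm
          have e3 : ‖rclm μ (n + 1) x‖ ≤
              (∑ j ∈ Finset.range k, ‖c j • rclm μ n (x * ω j)‖)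
                + ∑' i : ℕ, ‖c (i + k) • rclm μ n (x * ω (i + k))‖ := by
            rw [Summable.sum_add_tsum_nat_add k hgsumm]; exact e2
          -- head terms via the inductive hypothesis
          have hrw : ∀ j : ℕ, x * ω j
              = a m * wprod ω l (L ++ [j]) - e (a m) • wprod ω l (L ++ [j]) := by
            intro j
            rw [wprod_append, hx, sub_mul, mul_assoc, smul_mul_assoc]
          set B : ℝ := 2 * M * θ ^ n + (2 * M + 1) * (((n : ℝ) + (R + 2)) * (n : ℝ)) * δ k
            with hB
          have hB0 : (0:ℝ) ≤ B := by
            have h3 : (0:ℝ) ≤ ((n : ℝ) + (R + 2)) * (n : ℝ) :=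
              mul_nonneg (by linarith) hNn
            have t1 : (0:ℝ) ≤ 2 * M * θ ^ n := mul_nonneg (by linarith) hpn
            have t2 : (0:ℝ) ≤ (2 * M + 1) * (((n : ℝ) + (R + 2)) * (n : ℝ)) * δ k :=
              mul_nonneg (mul_nonneg (by linarith) h3) (le_of_lt hdk)
            rw [hB]
            linarith
          have hhead : ∀ j ∈ Finset.range k,
              ‖c j • rclm μ n (x * ω j)‖ ≤ (2:ℝ)⁻¹ ^ (j + 1) * B := by
            intro j hj
            rw [norm_smul, hcnorm]
            refine mul_le_mul_of_nonneg_left ?_ (le_of_lt (hcrpos j))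
            rw [hrw j]
            have hlen : ∀ i ∈ L ++ [j], i < k := by
              intro i hi
              rcases List.mem_append.mp hi with h | h
              · exact hL i h
              · simp only [List.mem_singleton] at h; subst h; exact Finset.mem_range.mp hj
            have hih := ih l (L ++ [j]) hl hlen
            have hlen2 : (((L ++ [j]).length : ℕ) : ℝ) = R + 1 := by
              simp [hR]
            rw [hlen2] at hih
            have heq : 2 * M * θ ^ n + (2 * M + 1) * (((n : ℝ) + ((R + 1) + 1)) * (n : ℝ)) * δ k
                = B := by rw [hB]; ring
            rw [heq] at hih
            exact hih
          have hheadsum : ∑ j ∈ Finset.range k, ‖c j • rclm μ n (x * ω j)‖ ≤ θ * B := by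
            calc ∑ j ∈ Finset.range k, ‖c j • rclm μ n (x * ω j)‖
                ≤ ∑ j ∈ Finset.range k, (2:ℝ)⁻¹ ^ (j + 1) * B := Finset.sum_le_sum hhead
              _ = (∑ j ∈ Finset.range k, (2:ℝ)⁻¹ ^ (j + 1)) * B := by rw [Finset.sum_mul]
              _ = θ * B := by rw [hgeom k, ← hθ]
          -- tail terms
          have h4 : (0:ℝ) ≤ 2 * M * (R + 1) + 1 := by
            have := mul_nonneg (mul_nonneg (by norm_num : (0:ℝ) ≤ 2) hM0) (by linarith : (0:ℝ) ≤ R + 1)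
            linarith
          have htail : ∀ i : ℕ, ‖c (i + k) • rclm μ n (x * ω (i + k))‖
              ≤ (2:ℝ)⁻¹ ^ (i + k + 1) * ((2 * M * (R + 1) + 1) * δ k) := by
            intro i
            rw [norm_smul, hcnorm]
            refine mul_le_mul_of_nonneg_left ?_ (le_of_lt (hcrpos _))
            have h1 : ‖rclm μ n (x * ω (i + k))‖ ≤ ‖x * ω (i + k)‖ := rclm_norm_le μ hμle1 n _
            have h2 : ‖x * ω (i + k)‖ ≤ (2 * M * (R + 1) + 1) * δ (i + k) :=
              hkey l L (i + k) hl hL (Nat.le_add_left k i)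
            have h3 : δ (i + k) ≤ δ k := hδanti (Nat.le_add_left k i)
            calc ‖rclm μ n (x * ω (i + k))‖ ≤ (2 * M * (R + 1) + 1) * δ (i + k) :=
                  le_trans h1 h2
              _ ≤ (2 * M * (R + 1) + 1) * δ k := mul_le_mul_of_nonneg_left h3 h4
          have htailsumm1 : Summable (fun i : ℕ => ‖c (i + k) • rclm μ n (x * ω (i + k))‖) :=
            (summable_nat_add_iff (f := fun j : ℕ => ‖c j • rclm μ n (x * ω j)‖) k).mpr hgsumm
          have htailsumm2 : Summable
              (fun i : ℕ => (2:ℝ)⁻¹ ^ (i + k + 1) * ((2 * M * (R + 1) + 1) * δ k)) :=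
            ((summable_nat_add_iff (f := fun j : ℕ => (2:ℝ)⁻¹ ^ (j + 1)) k).mpr
              hsum_norm).mul_right _
          have h7 : ∑' i : ℕ, (2:ℝ)⁻¹ ^ (i + k + 1) = (2:ℝ)⁻¹ ^ k := by
            have h8 := Summable.sum_add_tsum_nat_add k hsum_norm
            rw [hgeom k, hsum_total] at h8
            linarith
          have htailsum : ∑' i : ℕ, ‖c (i + k) • rclm μ n (x * ω (i + k))‖
              ≤ (2 * M * (R + 1) + 1) * δ k := by
            have h5 := Summable.tsum_le_tsum htail htailsumm1 htailsumm2
            have h6 : ∑' i : ℕ, (2:ℝ)⁻¹ ^ (i + k + 1) * ((2 * M * (R + 1) + 1) * δ k)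
                = (∑' i : ℕ, (2:ℝ)⁻¹ ^ (i + k + 1)) * ((2 * M * (R + 1) + 1) * δ k) :=
              tsum_mul_right
            rw [h6, h7] at h5
            have h9 : (2:ℝ)⁻¹ ^ k * ((2 * M * (R + 1) + 1) * δ k)
                ≤ 1 * ((2 * M * (R + 1) + 1) * δ k) := by
              refine mul_le_mul_of_nonneg_right hxk1 ?_
              exact mul_nonneg h4 (le_of_lt hdk)
            rw [one_mul] at h9
            linarith
          -- final arithmetic
          have harith : θ * B + (2 * M * (R + 1) + 1) * δ k ≤
              2 * M * θ ^ (n + 1)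
                + (2 * M + 1) * (((n : ℝ) + 1 + (R + 1)) * ((n : ℝ) + 1)) * δ k := by
            have hp : θ ^ (n + 1) = θ * θ ^ n := pow_succ' θ n
            rw [hp, hB]
            exact kv_arith θ (θ ^ n) (δ k) (n : ℝ) R M hθ0 hθ1 hpn (le_of_lt hdk) hNn hR0 hM0
          push_cast
          have final := le_trans e3 (le_trans (add_le_add hheadsum htailsum) harith)
          push_cast at final
          linarith [final]
    -- now the length-zero expansion
    intro n
    have hNn : (0:ℝ) ≤ (n : ℝ) := Nat.cast_nonneg n
    have hpn : (0:ℝ) ≤ θ ^ n := pow_nonneg hθ0 n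
    have hbase : ∀ j : ℕ, ‖a m * ω j - e (a m) • ω j‖ ≤ 2 * M := fun j => hhnorm j []
    have hsummand2 : Summable (fun j => c j • (e (a m) • ω j)) := by
      apply Summable.of_norm
      refine Summable.of_nonneg_of_le (fun j => norm_nonneg _) (fun j => ?_)
        (hsum_norm.mul_right M)
      rw [norm_smul, hcnorm, norm_smul, hω1, mul_one]
      exact mul_le_mul_of_nonneg_left heM (le_of_lt (hcrpos j))
    have hsummand3 : Summable (fun j => c j • (a m * ω j - e (a m) • ω j)) := by
      apply Summable.of_norm
      refine Summable.of_nonneg_of_le (fun j => norm_nonneg _) (fun j => ?_)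
        (hsum_norm.mul_right (2 * M))
      rw [norm_smul, hcnorm]
      exact mul_le_mul_of_nonneg_left (hbase j) (le_of_lt (hcrpos j))
    have hv : a m * μ - e (a m) • μ = ∑' j, c j • (a m * ω j - e (a m) • ω j) := by
      have h1 : e (a m) • μ = ∑' j, c j • (e (a m) • ω j) := by
        rw [hμdef, ← Summable.tsum_const_smul _ hμsummand]
        exact tsum_congr fun j => smul_comm _ _ _
      rw [hexp (a m), h1, ← Summable.tsum_sub (hsumm_mul (a m)) hsummand2]
      exact tsum_congr fun j => (smul_sub _ _ _).symm
    have e1 : rclm μ n (∑' j, c j • (a m * ω j - e (a m) • ω j))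
        = ∑' j, c j • rclm μ n (a m * ω j - e (a m) • ω j) := by
      rw [(rclm μ n).map_tsum hsummand3]
      exact tsum_congr fun j => (rclm μ n).map_smul _ _
    have hterm : ∀ j, ‖c j • rclm μ n (a m * ω j - e (a m) • ω j)‖
        ≤ (2:ℝ)⁻¹ ^ (j + 1) * (2 * M) := by
      intro j
      rw [norm_smul, hcnorm]
      exact mul_le_mul_of_nonneg_left (le_trans (rclm_norm_le μ hμle1 n _) (hbase j))
        (le_of_lt (hcrpos j))
    have hgsumm : Summable (fun j => ‖c j • rclm μ n (a m * ω j - e (a m) • ω j)‖) :=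
      Summable.of_nonneg_of_le (fun j => norm_nonneg _) hterm (hsum_norm.mul_right _)
    have e2 : ‖a m * algPow μ n - e (a m) • algPow μ n‖
        ≤ ∑' j, ‖c j • rclm μ n (a m * ω j - e (a m) • ω j)‖ := by
      rw [hD_rclm (a m) n, hv, e1]
      exact norm_tsum_le_tsum_norm hgsumm
    have e3 : ‖a m * algPow μ n - e (a m) • algPow μ n‖ ≤
        (∑ j ∈ Finset.range k, ‖c j • rclm μ n (a m * ω j - e (a m) • ω j)‖)
          + ∑' i : ℕ, ‖c (i + k) • rclm μ n (a m * ω (i + k) - e (a m) • ω (i + k))‖ := by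
      rw [Summable.sum_add_tsum_nat_add k hgsumm]; exact e2
    set B1 : ℝ := 2 * M * θ ^ n + (2 * M + 1) * (((n : ℝ) + 1) * (n : ℝ)) * δ k with hB1
    have hB10 : (0:ℝ) ≤ B1 := by
      have t1 : (0:ℝ) ≤ 2 * M * θ ^ n := mul_nonneg (by linarith) hpn
      have t2 : (0:ℝ) ≤ (2 * M + 1) * (((n : ℝ) + 1) * (n : ℝ)) * δ k :=
        mul_nonneg (mul_nonneg (by linarith) (mul_nonneg (by linarith) hNn)) (le_of_lt hdk)
      rw [hB1]; linarith
    have hhead : ∀ j ∈ Finset.range k,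
        ‖c j • rclm μ n (a m * ω j - e (a m) • ω j)‖ ≤ (2:ℝ)⁻¹ ^ (j + 1) * B1 := by
      intro j hj
      rw [norm_smul, hcnorm]
      refine mul_le_mul_of_nonneg_left ?_ (le_of_lt (hcrpos j))
      have hm := main n j [] (Finset.mem_range.mp hj) (by simp)
      simp only [List.length_nil, Nat.cast_zero, zero_add] at hm
      rw [hB1]
      exact hm
    have hheadsum : ∑ j ∈ Finset.range k, ‖c j • rclm μ n (a m * ω j - e (a m) • ω j)‖
        ≤ θ * B1 := by
      calc ∑ j ∈ Finset.range k, ‖c j • rclm μ n (a m * ω j - e (a m) • ω j)‖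
          ≤ ∑ j ∈ Finset.range k, (2:ℝ)⁻¹ ^ (j + 1) * B1 := Finset.sum_le_sum hhead
        _ = (∑ j ∈ Finset.range k, (2:ℝ)⁻¹ ^ (j + 1)) * B1 := by rw [Finset.sum_mul]
        _ = θ * B1 := by rw [hgeom k, ← hθ]
    have htail : ∀ i : ℕ, ‖c (i + k) • rclm μ n (a m * ω (i + k) - e (a m) • ω (i + k))‖
        ≤ (2:ℝ)⁻¹ ^ (i + k + 1) * δ k := by
      intro i
      rw [norm_smul, hcnorm]
      refine mul_le_mul_of_nonneg_left ?_ (le_of_lt (hcrpos _))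
      have h1 : ‖rclm μ n (a m * ω (i + k) - e (a m) • ω (i + k))‖
          ≤ ‖a m * ω (i + k) - e (a m) • ω (i + k)‖ := rclm_norm_le μ hμle1 n _
      have h2 : ‖a m * ω (i + k) - e (a m) • ω (i + k)‖ ≤ δ (i + k) :=
        le_of_lt (hωa m (i + k) (le_trans hmk (Nat.le_add_left k i)))
      exact le_trans h1 (le_trans h2 (hδanti (Nat.le_add_left k i)))
    have htailsumm1 : Summable
        (fun i : ℕ => ‖c (i + k) • rclm μ n (a m * ω (i + k) - e (a m) • ω (i + k))‖) :=
      (summable_nat_add_iff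
        (f := fun j : ℕ => ‖c j • rclm μ n (a m * ω j - e (a m) • ω j)‖) k).mpr hgsumm
    have htailsumm2 : Summable (fun i : ℕ => (2:ℝ)⁻¹ ^ (i + k + 1) * δ k) :=
      ((summable_nat_add_iff (f := fun j : ℕ => (2:ℝ)⁻¹ ^ (j + 1)) k).mpr
        hsum_norm).mul_right _
    have h7 : ∑' i : ℕ, (2:ℝ)⁻¹ ^ (i + k + 1) = (2:ℝ)⁻¹ ^ k := by
      have h8 := Summable.sum_add_tsum_nat_add k hsum_norm
      rw [hgeom k, hsum_total] at h8
      linarith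
    have htailsum : ∑' i : ℕ, ‖c (i + k) • rclm μ n (a m * ω (i + k) - e (a m) • ω (i + k))‖
        ≤ δ k := by
      have h5 := Summable.tsum_le_tsum htail htailsumm1 htailsumm2
      have h6 : ∑' i : ℕ, (2:ℝ)⁻¹ ^ (i + k + 1) * δ k
          = (∑' i : ℕ, (2:ℝ)⁻¹ ^ (i + k + 1)) * δ k := tsum_mul_right
      rw [h6, h7] at h5
      have h9 : (2:ℝ)⁻¹ ^ k * δ k ≤ 1 * δ k :=
        mul_le_mul_of_nonneg_right hxk1 (le_of_lt hdk)
      rw [one_mul] at h9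
      linarith
    -- final arithmetic for the length-zero case
    have t1 : θ * B1 ≤ B1 := by
      have := mul_le_mul_of_nonneg_right hθ1 hB10
      rwa [one_mul] at this
    have u0 : (1:ℝ) ≤ (2 * M + 1) * ((n : ℝ) + 1) := by
      have h1 : (1:ℝ) ≤ 2 * M + 1 := by linarith
      have h2 : (1:ℝ) ≤ (n : ℝ) + 1 := by linarith
      calc (1:ℝ) = 1 * 1 := by ring
        _ ≤ (2 * M + 1) * ((n : ℝ) + 1) := mul_le_mul h1 h2 zero_le_one (by linarith)
    have t2 : B1 + δ k ≤ 2 * M * θ ^ n + (2 * M + 1) * ((n : ℝ) + 1) ^ 2 * δ k := by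
      rw [hB1]
      have u1 : (0:ℝ) ≤ ((2 * M + 1) * ((n : ℝ) + 1) - 1) * δ k :=
        mul_nonneg (by linarith) (le_of_lt hdk)
      nlinarith [u1]
    linarith [e3, hheadsum, htailsum, t1, t2]
  -- specialization n = 4 ^ k
  have spec4 : ∀ m k : ℕ, m ≤ k →
      ‖a m * algPow μ (4 ^ k) - e (a m) • algPow μ (4 ^ k)‖
        ≤ (10 * ‖a m‖ + 4) * (2:ℝ)⁻¹ ^ k := by
    intro m k hmk
    have hb := bound m k hmk (4 ^ k)
    set M := ‖a m‖ with hM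
    have hM0 : (0:ℝ) ≤ M := norm_nonneg _
    set x : ℝ := (2:ℝ)⁻¹ ^ k with hx
    have hx0 : 0 < x := pow_pos (by norm_num) k
    have hx1 : x ≤ 1 := pow_le_one₀ (by norm_num) (by norm_num)
    set nn : ℕ := 4 ^ k with hnn
    have hbern : (1:ℝ) + (nn : ℝ) * x ≤ (1 + x) ^ nn := one_add_mul_le_pow (by linarith) nn
    have hnx : ((nn : ℕ) : ℝ) * x = 2 ^ k := by
      rw [hnn, hx]
      push_cast
      rw [← mul_pow]
      norm_num
    have hgeompow : (1 - x) ^ nn ≤ x := by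
      have h1 : ((1 - x) * (1 + x)) ^ nn ≤ 1 := by
        have heq : (1 - x) * (1 + x) = 1 - x ^ 2 := by ring
        rw [heq]
        exact pow_le_one₀ (by nlinarith) (by nlinarith)
      have hpos : (0:ℝ) ≤ (1 - x) ^ nn := pow_nonneg (by linarith) nn
      have h3 : (1 - x) ^ nn * (1 + (nn : ℝ) * x) ≤ 1 := by
        calc (1 - x) ^ nn * (1 + (nn : ℝ) * x) ≤ (1 - x) ^ nn * (1 + x) ^ nn :=
              mul_le_mul_of_nonneg_left hbern hpos
          _ = ((1 - x) * (1 + x)) ^ nn := (mul_pow _ _ _).symm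
          _ ≤ 1 := h1
      have h4 : (0:ℝ) < 1 + (nn : ℝ) * x := by
        have : (0:ℝ) ≤ (nn : ℝ) * x := mul_nonneg (Nat.cast_nonneg _) (le_of_lt hx0)
        linarith
      have h5 : (1 - x) ^ nn ≤ 1 / (1 + (nn : ℝ) * x) := (le_div_iff₀ h4).mpr h3
      have h6 : 1 / (1 + (nn : ℝ) * x) ≤ x := by
        rw [hnx]
        have h7 : (0:ℝ) < 2 ^ k := pow_pos (by norm_num) k
        calc 1 / (1 + (2:ℝ) ^ k) ≤ 1 / 2 ^ k :=
              one_div_le_one_div_of_le h7 (by linarith)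
          _ = x := by rw [hx, one_div, ← inv_pow]
      exact le_trans h5 h6
    -- the polynomial-error term
    have h16 : (16:ℝ) ^ k = 4 ^ k * 4 ^ k := by
      rw [show (16:ℝ) = 4 * 4 by norm_num, mul_pow]
    have hone4 : (1:ℝ) ≤ 4 ^ k := one_le_pow₀ (by norm_num)
    have hd1 : ((nn : ℕ) : ℝ) + 1 ≤ 2 * 4 ^ k := by
      rw [hnn]
      push_cast
      linarith
    have hd2 : (((nn : ℕ) : ℝ) + 1) ^ 2 ≤ 4 * 16 ^ k := by
      have h2 : (0:ℝ) ≤ ((nn : ℕ) : ℝ) + 1 := by positivity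
      calc (((nn : ℕ) : ℝ) + 1) ^ 2 ≤ (2 * 4 ^ k) ^ 2 := pow_le_pow_left₀ h2 hd1 2
        _ = 4 * (4 ^ k * 4 ^ k) := by ring
        _ = 4 * 16 ^ k := by rw [← h16]
    have hδk : δ k = (32:ℝ)⁻¹ ^ k := rfl
    have hd3 : (16:ℝ) ^ k * δ k = x := by
      rw [hδk, hx, ← mul_pow]
      norm_num
    have hd4 : (2 * M + 1) * (((nn : ℕ) : ℝ) + 1) ^ 2 * δ k ≤ 4 * (2 * M + 1) * x := by
      have hdk0 : (0:ℝ) ≤ δ k := le_of_lt (hδpos k)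
      calc (2 * M + 1) * (((nn : ℕ) : ℝ) + 1) ^ 2 * δ k
          ≤ (2 * M + 1) * (4 * 16 ^ k) * δ k := by
            refine mul_le_mul_of_nonneg_right ?_ hdk0
            exact mul_le_mul_of_nonneg_left hd2 (by linarith)
        _ = 4 * (2 * M + 1) * ((16:ℝ) ^ k * δ k) := by ring
        _ = 4 * (2 * M + 1) * x := by rw [hd3]
    have hterm1 : 2 * M * (1 - x) ^ nn ≤ 2 * M * x :=
      mul_le_mul_of_nonneg_left hgeompow (by linarith)
    calc ‖a m * algPow μ nn - e (a m) • algPow μ nn‖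
        ≤ 2 * M * (1 - x) ^ nn + (2 * M + 1) * (((nn : ℕ) : ℝ) + 1) ^ 2 * δ k := hb
      _ ≤ 2 * M * x + 4 * (2 * M + 1) * x := add_le_add hterm1 hd4
      _ = (10 * M + 4) * x := by ring
  -- conclusion
  refine ⟨μ, hμnorm, heμ, ?_⟩
  intro f
  have hmono : ∀ (g : A) (n : ℕ), ‖g * algPow μ (n + 1) - e g • algPow μ (n + 1)‖
      ≤ ‖g * algPow μ n - e g • algPow μ n‖ := by
    intro g n
    have hDmul : g * algPow μ (n + 1) - e g • algPow μ (n + 1)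
        = (g * algPow μ n - e g • algPow μ n) * μ := by
      rw [halg_succ, ← mul_assoc, ← smul_mul_assoc, ← sub_mul]
    rw [hDmul]
    exact le_trans (norm_mul_le _ _) (by rw [hμnorm, mul_one])
  have hanti : ∀ (g : A) (n N : ℕ), N ≤ n →
      ‖g * algPow μ n - e g • algPow μ n‖ ≤ ‖g * algPow μ N - e g • algPow μ N‖ := by
    intro g n N h
    induction n, h using Nat.le_induction with
    | base => exact le_refl _
    | succ n hn ih => exact le_trans (hmono g n) ih
  have hcomp : ∀ (g : A) (m n : ℕ), ‖g * algPow μ n - e g • algPow μ n‖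
      ≤ ‖a m * algPow μ n - e (a m) • algPow μ n‖ + 2 * ‖g - a m‖ := by
    intro g m n
    have hdiff : g * algPow μ n - e g • algPow μ n
        - (a m * algPow μ n - e (a m) • algPow μ n)
        = (g - a m) * algPow μ n - (e (g - a m)) • algPow μ n := by
      rw [sub_mul, map_sub, sub_smul]
      abel
    have hP : ‖algPow μ n‖ ≤ 1 := halg_norm n
    have h2 : ‖(g - a m) * algPow μ n‖ ≤ ‖g - a m‖ := by
      calc ‖(g - a m) * algPow μ n‖ ≤ ‖g - a m‖ * ‖algPow μ n‖ := norm_mul_le _ _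
        _ ≤ ‖g - a m‖ * 1 := mul_le_mul_of_nonneg_left hP (norm_nonneg _)
        _ = ‖g - a m‖ := mul_one _
    have h3 : ‖(e (g - a m)) • algPow μ n‖ ≤ ‖g - a m‖ := by
      rw [norm_smul]
      calc ‖e (g - a m)‖ * ‖algPow μ n‖ ≤ ‖g - a m‖ * 1 :=
            mul_le_mul (he_contr _) hP (norm_nonneg _) (norm_nonneg _)
        _ = ‖g - a m‖ := mul_one _
    have h4 : ‖g * algPow μ n - e g • algPow μ n
        - (a m * algPow μ n - e (a m) • algPow μ n)‖ ≤ 2 * ‖g - a m‖ := by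
      rw [hdiff]
      calc ‖(g - a m) * algPow μ n - (e (g - a m)) • algPow μ n‖
          ≤ ‖(g - a m) * algPow μ n‖ + ‖(e (g - a m)) • algPow μ n‖ := norm_sub_le _ _
        _ ≤ ‖g - a m‖ + ‖g - a m‖ := add_le_add h2 h3
        _ = 2 * ‖g - a m‖ := by ring
    calc ‖g * algPow μ n - e g • algPow μ n‖
        = ‖(a m * algPow μ n - e (a m) • algPow μ n)
            + (g * algPow μ n - e g • algPow μ n
              - (a m * algPow μ n - e (a m) • algPow μ n))‖ := by
          congr 1
          abel
      _ ≤ ‖a m * algPow μ n - e (a m) • algPow μ n‖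
          + ‖g * algPow μ n - e g • algPow μ n
            - (a m * algPow μ n - e (a m) • algPow μ n)‖ := norm_add_le _ _
      _ ≤ ‖a m * algPow μ n - e (a m) • algPow μ n‖ + 2 * ‖g - a m‖ := by linarith [h4]
  rw [Metric.tendsto_atTop]
  intro ε hε
  obtain ⟨m, hm⟩ := ha.exists_dist_lt f (by linarith : (0:ℝ) < ε / 8)
  rw [dist_eq_norm] at hm
  have hM0 : (0:ℝ) ≤ ‖a m‖ := norm_nonneg _
  obtain ⟨k0, hk0⟩ := exists_pow_lt_of_lt_one
    (x := ε / 2 / (10 * ‖a m‖ + 4)) (by positivity) (by norm_num : (2:ℝ)⁻¹ < 1)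
  set k : ℕ := max m k0 with hk
  have hk1 : (10 * ‖a m‖ + 4) * (2:ℝ)⁻¹ ^ k < ε / 2 := by
    have h1 : (2:ℝ)⁻¹ ^ k ≤ (2:ℝ)⁻¹ ^ k0 :=
      pow_le_pow_of_le_one (by norm_num) (by norm_num) (le_max_right m k0)
    have h3 : (0:ℝ) < 10 * ‖a m‖ + 4 := by linarith
    calc (10 * ‖a m‖ + 4) * (2:ℝ)⁻¹ ^ k ≤ (10 * ‖a m‖ + 4) * (2:ℝ)⁻¹ ^ k0 :=
          mul_le_mul_of_nonneg_left h1 (le_of_lt h3)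
      _ < (10 * ‖a m‖ + 4) * (ε / 2 / (10 * ‖a m‖ + 4)) := mul_lt_mul_of_pos_left hk0 h3
      _ = ε / 2 := by field_simp
  refine ⟨4 ^ k, fun n hn => ?_⟩
  have hb := spec4 m k (le_max_left m k0)
  have h1 := hanti f n (4 ^ k) hn
  have h2 := hcomp f m (4 ^ k)
  have hdist : dist ‖f * algPow μ n - e f • algPow μ n‖ 0
      = ‖f * algPow μ n - e f • algPow μ n‖ := by
    rw [Real.dist_eq, sub_zero, abs_of_nonneg (norm_nonneg _)]
  rw [hdist]
  linarith [hb, h1, h2, hk1, hm]
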